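/- Let n be odd, x ∈ S^m ⊂ ℝ^{m+1}, y ∈ S^n ⊂ ℝ^{n+1}. Define t ∈ ℝ^{n+1} by t_j = -y_{j+1} if j is odd and t_j = y_{j-1} if j is even (so t = T(y) is the unit tangent field from complex multiplication), M_i(x) = e_i - x_i x, N_j(y) = e_j - y_j y. Then the m+n vectors p_i = (M_i(x), x_i • t) for i = 1,…,m-1 and p_{m-1+j} = (y_j M_m(x) + t_j M_{m+1}(x), (t_j x_{m+1} + y_j x_m - t_j) • t + N_j(y)) for j = 1,…,n+1 form an orthonormal basis of the tangent space T_x S^m × T_y S^n = x^⊥ × y^⊥ ⊂ ℝ^{m+1} × ℝ^{n+1}. -/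

import Mathlib

open scoped RealInnerProductSpace

/-- The `i`-th meridian vector `e_i - x_i x` on a sphere. -/
noncomputable def meridian {m : ℕ} (x : EuclideanSpace ℝ (Fin (m + 1))) (i : Fin (m + 1)) :
    EuclideanSpace ℝ (Fin (m + 1)) :=
  EuclideanSpace.single i 1 - x i • x

/-- For odd `n`, the unit tangent field on `Sⁿ` from complex multiplication:
(1-based) `t_j = -y_{j+1}` for `j` odd, `t_j = y_{j-1}` for `j` even. -/
noncomputable def tvec {n : ℕ} (hn : Odd n) (y : EuclideanSpace ℝ (Fin (n + 1))) :
    EuclideanSpace ℝ (Fin (n + 1)) :=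
  WithLp.toLp 2 fun k => if h : (k : ℕ) % 2 = 0 then
      -y ⟨(k : ℕ) + 1, by have h1 := k.isLt; have h2 := Nat.odd_iff.mp hn; omega⟩
    else y ⟨(k : ℕ) - 1, by have h1 := k.isLt; omega⟩

/-- The inner product on the orthogonal direct sum `ℝ^{m+1} ⊕ ℝ^{n+1}`. -/
noncomputable def innP {m n : ℕ}
    (u v : EuclideanSpace ℝ (Fin (m + 1)) × EuclideanSpace ℝ (Fin (n + 1))) : ℝ :=
  ⟪u.1, v.1⟫ + ⟪u.2, v.2⟫

/-- The explicit frame `𝓟` on `Sᵐ × Sⁿ` (`n` odd):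
`p_i = (M_i(x), x_i t)` for `i = 1,…,m-1` and
`p_{m-1+j} = (y_j M_m + t_j M_{m+1}, (t_j x_{m+1} + y_j x_m - t_j) t + N_j(y))`
for `j = 1,…,n+1`. -/
noncomputable def pFrame {m n : ℕ} (hm : 2 ≤ m) (hn : Odd n)
    (x : EuclideanSpace ℝ (Fin (m + 1))) (y : EuclideanSpace ℝ (Fin (n + 1))) :
    Fin (m - 1) ⊕ Fin (n + 1) →
      EuclideanSpace ℝ (Fin (m + 1)) × EuclideanSpace ℝ (Fin (n + 1)) :=
  Sum.elim
    (fun i => (meridian x ⟨(i : ℕ), by have := i.isLt; omega⟩,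
      x ⟨(i : ℕ), by have := i.isLt; omega⟩ • tvec hn y))
    (fun j =>
      (y j • meridian x ⟨m - 1, by omega⟩ + tvec hn y j • meridian x ⟨m, by omega⟩,
       (tvec hn y j * x ⟨m, by omega⟩ + y j * x ⟨m - 1, by omega⟩ - tvec hn y j) • tvec hn y
         + meridian y j))

def sig {n : ℕ} (hn : Odd n) (k : Fin (n + 1)) : Fin (n + 1) :=
  if h : (k : ℕ) % 2 = 0 then ⟨(k : ℕ) + 1, by have h1 := k.isLt; have h2 := Nat.odd_iff.mp hn; omega⟩
  else ⟨(k : ℕ) - 1, by have h1 := k.isLt; omega⟩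

lemma sig_val_even {n : ℕ} (hn : Odd n) (k : Fin (n+1)) (h : (k:ℕ) % 2 = 0) :
    ((sig hn k : Fin (n+1)) : ℕ) = (k:ℕ) + 1 := by simp [sig, h]

lemma sig_val_odd {n : ℕ} (hn : Odd n) (k : Fin (n+1)) (h : (k:ℕ) % 2 = 1) :
    ((sig hn k : Fin (n+1)) : ℕ) = (k:ℕ) - 1 := by simp [sig, h]

lemma sig_sig {n : ℕ} (hn : Odd n) (k : Fin (n+1)) : sig hn (sig hn k) = k := by
  apply Fin.ext
  rcases Nat.even_or_odd (k:ℕ) with h | h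
  · rw [Nat.even_iff] at h
    have h1 := sig_val_even hn k h
    have h2 : ((sig hn k : Fin (n+1)) : ℕ) % 2 = 1 := by omega
    rw [sig_val_odd hn _ h2, h1]; omega
  · rw [Nat.odd_iff] at h
    have h1 := sig_val_odd hn k h
    have hk : 1 ≤ (k:ℕ) := by omega
    have h2 : ((sig hn k : Fin (n+1)) : ℕ) % 2 = 0 := by omega
    rw [sig_val_even hn _ h2, h1]; omega

lemma sig_ne {n : ℕ} (hn : Odd n) (k : Fin (n+1)) : sig hn k ≠ k := by
  intro hh
  rcases Nat.even_or_odd (k:ℕ) with h | h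
  · rw [Nat.even_iff] at h
    have h1 := sig_val_even hn k h
    rw [hh] at h1; omega
  · rw [Nat.odd_iff] at h
    have h1 := sig_val_odd hn k h
    rw [hh] at h1; omega

lemma tvec_eq {n : ℕ} (hn : Odd n) (y : EuclideanSpace ℝ (Fin (n + 1))) (k : Fin (n+1)) :
    tvec hn y k = (if (k:ℕ) % 2 = 0 then (-1:ℝ) else 1) * y (sig hn k) := by
  by_cases h : (k:ℕ) % 2 = 0
  · rw [if_pos h]; unfold tvec sig; simp only [WithLp.ofLp_toLp]; rw [dif_pos h, dif_pos h]; ring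
  · rw [if_neg h]; unfold tvec sig; simp only [WithLp.ofLp_toLp]; rw [dif_neg h, dif_neg h]; ring

lemma tvec_sig {n : ℕ} (hn : Odd n) (y : EuclideanSpace ℝ (Fin (n + 1))) (k : Fin (n+1)) :
    tvec hn y (sig hn k) = (if (k:ℕ) % 2 = 0 then (1:ℝ) else -1) * y k := by
  have key := tvec_eq hn y (sig hn k)
  rw [sig_sig hn k] at key
  rcases Nat.even_or_odd (k:ℕ) with h | h
  · rw [Nat.even_iff] at h
    have h2 : ((sig hn k : Fin (n+1)) : ℕ) % 2 = 1 := by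
      have := sig_val_even hn k h; omega
    rw [key, if_neg (by omega), if_pos h]
  · rw [Nat.odd_iff] at h
    have h2 : ((sig hn k : Fin (n+1)) : ℕ) % 2 = 0 := by
      have := sig_val_odd hn k h; omega
    rw [key, if_pos h2, if_neg (by omega)]

lemma inner_tvec_tvec {n : ℕ} (hn : Odd n) (y : EuclideanSpace ℝ (Fin (n + 1))) :
    ⟪tvec hn y, tvec hn y⟫ = ⟪y, y⟫ := by
  simp only [PiLp.inner_apply, RCLike.inner_apply, conj_trivial]
  have : ∀ k, tvec hn y k * tvec hn y k = y (sig hn k) * y (sig hn k) := by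
    intro k; rw [tvec_eq hn y k]; by_cases h : (k:ℕ) % 2 = 0 <;> simp [h]
  simp_rw [this]
  exact Fintype.sum_equiv (Function.Involutive.toPerm _ (sig_sig hn)) _ _ (fun k => rfl)

lemma inner_tvec_y {n : ℕ} (hn : Odd n) (y : EuclideanSpace ℝ (Fin (n + 1))) :
    ⟪tvec hn y, y⟫ = 0 := by
  simp only [PiLp.inner_apply, RCLike.inner_apply, conj_trivial]
  apply Finset.sum_involution (fun k _ => sig hn k)
  · intro k _
    rw [tvec_eq hn y k, tvec_sig hn y k]
    by_cases h : (k:ℕ) % 2 = 0 <;> simp [h] <;> ring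
  · intro k _ _; exact sig_ne hn k
  · intro k _; exact Finset.mem_univ _
  · intro k _; exact sig_sig hn k

lemma meridian_apply (x : EuclideanSpace ℝ (Fin (m+1))) (i j : Fin (m+1)) :
    meridian x i j = (if j = i then (1:ℝ) else 0) - x i * x j := by
  simp [meridian, EuclideanSpace.single_apply, mul_comm]

lemma inner_meridian_right (x v : EuclideanSpace ℝ (Fin (m+1))) (i : Fin (m+1)) :
    ⟪v, meridian x i⟫ = v i - x i * ⟪v, x⟫ := by
  simp [meridian, inner_sub_right, real_inner_smul_right, EuclideanSpace.inner_single_right,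
    Finset.mul_sum]

lemma inner_meridian_left (x v : EuclideanSpace ℝ (Fin (m+1))) (i : Fin (m+1)) :
    ⟪meridian x i, v⟫ = v i - x i * ⟪x, v⟫ := by
  rw [real_inner_comm, inner_meridian_right, real_inner_comm]

lemma inner_meridian_meridian (x : EuclideanSpace ℝ (Fin (m+1))) (hxx : ⟪x, x⟫ = 1)
    (i j : Fin (m+1)) :
    ⟪meridian x i, meridian x j⟫ = (if i = j then (1:ℝ) else 0) - x i * x j := by
  rw [inner_meridian_left, inner_meridian_right, meridian_apply, hxx]
  by_cases h : i = j
  · simp [h]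
  · simp [h, Ne.symm h]; ring

lemma innP_comm {m n : ℕ} (u v : EuclideanSpace ℝ (Fin (m + 1)) × EuclideanSpace ℝ (Fin (n + 1))) :
    innP u v = innP v u := by
  simp [innP, real_inner_comm u.1 v.1, real_inner_comm u.2 v.2]

lemma innP_sum {m n : ℕ} {ι : Type*} (s : Finset ι)
    (f : ι → EuclideanSpace ℝ (Fin (m + 1)) × EuclideanSpace ℝ (Fin (n + 1)))
    (v : EuclideanSpace ℝ (Fin (m + 1)) × EuclideanSpace ℝ (Fin (n + 1))) :
    innP (∑ i ∈ s, f i) v = ∑ i ∈ s, innP (f i) v := by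
  simp [innP, Prod.fst_sum, Prod.snd_sum, sum_inner, Finset.sum_add_distrib]

lemma innP_smul {m n : ℕ} (c : ℝ)
    (u v : EuclideanSpace ℝ (Fin (m + 1)) × EuclideanSpace ℝ (Fin (n + 1))) :
    innP (c • u) v = c * innP u v := by
  simp [innP, real_inner_smul_left, mul_add, Finset.mul_sum, mul_assoc]

def prodSubEquiv {R M N : Type*} [Ring R] [AddCommGroup M] [AddCommGroup N]
    [Module R M] [Module R N] (p : Submodule R M) (q : Submodule R N) :
    (p.prod q) ≃ₗ[R] p × q where
  toFun z := (⟨z.1.1, (Submodule.mem_prod.mp z.2).1⟩, ⟨z.1.2, (Submodule.mem_prod.mp z.2).2⟩)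
  invFun z := ⟨(z.1.1, z.2.1), Submodule.mem_prod.mpr ⟨z.1.2, z.2.2⟩⟩
  map_add' a b := rfl
  map_smul' c a := rfl
  left_inv a := rfl
  right_inv a := rfl

/-- The `m+n` vectors of the frame `𝓟` form an orthonormal basis of
`T_x Sᵐ × T_y Sⁿ = x^⊥ × y^⊥ ⊂ ℝ^{m+1} × ℝ^{n+1}`. -/
theorem stmt_16 (m n : ℕ) (hm : 2 ≤ m) (hn : Odd n)
    (x : EuclideanSpace ℝ (Fin (m + 1))) (y : EuclideanSpace ℝ (Fin (n + 1)))
    (hx : ‖x‖ = 1) (hy : ‖y‖ = 1) :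
    (∀ k l, innP (pFrame hm hn x y k) (pFrame hm hn x y l) = if k = l then (1 : ℝ) else 0) ∧
    (∀ k, pFrame hm hn x y k ∈ Submodule.prod (ℝ ∙ x)ᗮ (ℝ ∙ y)ᗮ) ∧
    Submodule.span ℝ (Set.range (pFrame hm hn x y)) = Submodule.prod (ℝ ∙ x)ᗮ (ℝ ∙ y)ᗮ := by
  have hxx : ⟪x, x⟫ = 1 := by
    rw [real_inner_self_eq_norm_sq, hx]; norm_num
  have hyy : ⟪y, y⟫ = 1 := by
    rw [real_inner_self_eq_norm_sq, hy]; norm_num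
  have htt : ⟪tvec hn y, tvec hn y⟫ = 1 := by rw [inner_tvec_tvec hn y, hyy]
  have hty : ⟪tvec hn y, y⟫ = 0 := inner_tvec_y hn y
  have hyt : ⟪y, tvec hn y⟫ = 0 := by rw [real_inner_comm]; exact hty
  have hne1 : ((⟨m - 1, by omega⟩ : Fin (m+1)) : ℕ) ≠ ((⟨m, by omega⟩ : Fin (m+1)) : ℕ) := by
    simp; omega
  have horth : ∀ k l, innP (pFrame hm hn x y k) (pFrame hm hn x y l)
      = if k = l then (1 : ℝ) else 0 := by
    have key : ∀ (i : Fin (m-1)) (j : Fin (n+1)),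
        innP (pFrame hm hn x y (Sum.inl i)) (pFrame hm hn x y (Sum.inr j)) = 0 := by
      intro i j
      simp only [pFrame, Sum.elim_inl, Sum.elim_inr, innP, inner_add_right,
        real_inner_smul_left, real_inner_smul_right,
        inner_meridian_meridian x hxx, inner_meridian_right, inner_meridian_left,
        htt, hty, hyt, hxx, hyy, Fin.mk.injEq]
      have e1 : ¬ ((i:ℕ) = m - 1) := by have := i.isLt; omega
      have e2 : ¬ ((i:ℕ) = m) := by have := i.isLt; omega
      rw [if_neg e1, if_neg e2]
      ring
    rintro (i | j) (i' | j')
    · simp only [pFrame, Sum.elim_inl, innP, real_inner_smul_left, real_inner_smul_right,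
        inner_meridian_meridian x hxx, htt, Sum.inl.injEq, Fin.mk.injEq]
      by_cases h : i = i'
      · subst h; simp
      · have : ¬ ((i:ℕ) = (i':ℕ)) := fun hh => h (Fin.ext hh)
        rw [if_neg this, if_neg (by simpa [Fin.ext_iff] using h)]
        ring
    · rw [key i j']; simp
    · rw [innP_comm, key i' j]; simp
    · simp only [pFrame, Sum.elim_inr, innP, inner_add_left, inner_add_right,
        real_inner_smul_left, real_inner_smul_right,
        inner_meridian_meridian x hxx, inner_meridian_meridian y hyy,
        inner_meridian_right, inner_meridian_left, meridian_apply,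
        htt, hty, hyt, hxx, hyy, Fin.mk.injEq, Sum.inr.injEq]
      rw [if_neg hne1, if_neg (Ne.symm hne1)]
      simp only [if_true]
      by_cases h : j = j'
      · subst h; simp only [if_pos rfl]; ring
      · rw [if_neg h]; ring
  have hmem : ∀ k, pFrame hm hn x y k ∈ Submodule.prod (ℝ ∙ x)ᗮ (ℝ ∙ y)ᗮ := by
    rintro (i | j) <;>
      refine Submodule.mem_prod.mpr
        ⟨Submodule.mem_orthogonal_singleton_iff_inner_right.mpr ?_,
         Submodule.mem_orthogonal_singleton_iff_inner_right.mpr ?_⟩ <;>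
      simp only [pFrame, Sum.elim_inl, Sum.elim_inr, inner_add_right,
        real_inner_smul_right, inner_meridian_right, hxx, hyy, hyt] <;>
      ring
  refine ⟨horth, hmem, ?_⟩
  · -- span
    have hli : LinearIndependent ℝ (pFrame hm hn x y) := by
      rw [Fintype.linearIndependent_iff]
      intro g hg l
      have h0 : innP (∑ i, g i • pFrame hm hn x y i) (pFrame hm hn x y l) = 0 := by
        rw [hg]; simp [innP]
      rw [innP_sum] at h0
      simp only [innP_smul, horth] at h0
      simpa using h0
    have hxne : x ≠ 0 := by
      intro h; rw [h, norm_zero] at hx; exact one_ne_zero hx.symm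
    have hyne : y ≠ 0 := by
      intro h; rw [h, norm_zero] at hy; exact one_ne_zero hy.symm
    have hf1 : Module.finrank ℝ ((ℝ ∙ x)ᗮ : Submodule ℝ (EuclideanSpace ℝ (Fin (m+1)))) = m := by
      have h1 : Module.finrank ℝ (ℝ ∙ x) = 1 := finrank_span_singleton hxne
      have h2 := Submodule.finrank_add_finrank_orthogonal (𝕜 := ℝ) (ℝ ∙ x)
      rw [h1, finrank_euclideanSpace_fin] at h2
      omega
    have hf2 : Module.finrank ℝ ((ℝ ∙ y)ᗮ : Submodule ℝ (EuclideanSpace ℝ (Fin (n+1)))) = n := by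
      have h1 : Module.finrank ℝ (ℝ ∙ y) = 1 := finrank_span_singleton hyne
      have h2 := Submodule.finrank_add_finrank_orthogonal (𝕜 := ℝ) (ℝ ∙ y)
      rw [h1, finrank_euclideanSpace_fin] at h2
      omega
    have hW : Module.finrank ℝ (Submodule.prod (ℝ ∙ x)ᗮ (ℝ ∙ y)ᗮ) = m + n := by
      rw [(prodSubEquiv _ _).finrank_eq, Module.finrank_prod, hf1, hf2]
    have hle : Submodule.span ℝ (Set.range (pFrame hm hn x y))
        ≤ Submodule.prod (ℝ ∙ x)ᗮ (ℝ ∙ y)ᗮ := by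
      rw [Submodule.span_le]
      rintro _ ⟨k, rfl⟩
      exact hmem k
    have hrs : Module.finrank ℝ (Submodule.span ℝ (Set.range (pFrame hm hn x y))) = m + n := by
      rw [finrank_span_eq_card hli]
      simp
      omega
    exact Submodule.eq_of_le_of_finrank_le hle (by rw [hW, hrs])
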